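/- Let 1 < p < ∞ with conjugate exponent p', let X be a complex Banach space, let n ∈ ℕ, and let (Ω, m) be a measure space which contains pairwise disjoint measurable sets S_1,…,S_n with 0 < m(S_i) < ∞ for each i. Then for x = (x_1,…,x_n) ∈ X^n the following are equivalent: (a) μ_{p,n}(x) ≤ 1; (b) there exist a bounded linear operator U : L^{p'}(Ω,m) → X with ‖U‖ ≤ 1 and functions f_1,…,f_n ∈ L^{p'}(Ω,m) with ‖f_i‖_{p'} ≤ 1, with f_i·f_j = 0 almost everywhere whenever i ≠ j, and with x_i = U(f_i) for each i ∈ {1,…,n}. -/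

import Mathlib

open MeasureTheory NormedSpace Set
open scoped ENNReal NNReal

/-- The weak `p`-summing norm of an `n`-tuple in a normed space `F`. -/
noncomputable def muP {F : Type*} [NormedAddCommGroup F] [NormedSpace ℂ F]
    (p : ℝ) {n : ℕ} (y : Fin n → F) : ℝ :=
  sSup { c : ℝ | ∃ l : StrongDual ℂ F, ‖l‖ ≤ 1 ∧ c = (∑ i, ‖l (y i)‖ ^ p) ^ (1 / p) }

/-!
(b) ⇒ (a): for `‖λ‖ ≤ 1` put `φ = λ ∘ U`. Since the `fᵢ` have disjoint supports and norm `≤ 1`,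
`‖∑ dᵢ fᵢ‖_{p'} ≤ (∑ |dᵢ|^{p'})^{1/p'}`; testing `φ` on this combination, with `d` the unit vector of
`ℓ^{p'}` that norms `(φ fᵢ)ᵢ ∈ ℓ^p`, gives `(∑ |λ xᵢ|^p)^{1/p} ≤ ‖φ‖ ≤ 1`.

(a) ⇒ (b): take `fᵢ = m(Sᵢ)^{-1/p'} 1_{Sᵢ}` and `U g = ∑ m(Sᵢ)^{-1/p} (∫_{Sᵢ} g) xᵢ`, so that
`U fᵢ = xᵢ`. For every `λ`, Hölder's inequality in `ℓ^p × ℓ^{p'}` and then on each `Sᵢ` gives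
`|λ (U g)| ≤ μ_{p,n}(x) ‖λ‖ (∑ᵢ ∫_{Sᵢ} |g|^{p'})^{1/p'} ≤ ‖λ‖ ‖g‖_{p'}`.
-/

lemma rpow_sum_norm_smul_rpow {ι 𝕜 E : Type*} [Fintype ι] [NormedField 𝕜]
    [NormedAddCommGroup E] [NormedSpace 𝕜 E] {p : ℝ} (hp : 0 < p) (c : 𝕜) (v : ι → E) :
    (∑ i, ‖c • v i‖ ^ p) ^ (1 / p) = ‖c‖ * (∑ i, ‖v i‖ ^ p) ^ (1 / p) := by
  simp_rw [norm_smul, Real.mul_rpow (norm_nonneg _) (norm_nonneg _)]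
  rw [← Finset.mul_sum, Real.mul_rpow (by positivity) (by positivity),
    ← Real.rpow_mul (norm_nonneg _), mul_one_div_cancel hp.ne', Real.rpow_one]

section WeakNorm

variable {F : Type*} [NormedAddCommGroup F] [NormedSpace ℂ F] {p : ℝ} {n : ℕ}

lemma le_muP (hp : 0 < p) (y : Fin n → F) {l : StrongDual ℂ F} (hl : ‖l‖ ≤ 1) :
    (∑ i, ‖l (y i)‖ ^ p) ^ (1 / p) ≤ muP p y := by
  refine le_csSup ⟨(∑ i, ‖y i‖ ^ p) ^ (1 / p), ?_⟩ ⟨l, hl, rfl⟩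
  rintro _ ⟨l', hl', rfl⟩
  gcongr with i
  exact (l'.le_opNorm _).trans (mul_le_of_le_one_left (norm_nonneg _) hl')

lemma muP_le_one_iff (hp : 0 < p) (y : Fin n → F) :
    muP p y ≤ 1 ↔ ∀ l : StrongDual ℂ F, (∑ i, ‖l (y i)‖ ^ p) ^ (1 / p) ≤ ‖l‖ := by
  refine ⟨fun h l => ?_, fun h => csSup_le ⟨_, 0, by simp, rfl⟩ ?_⟩
  · rcases eq_or_ne l 0 with rfl | hl
    · simp [Real.zero_rpow hp.ne', Real.zero_rpow (inv_pos.2 hp).ne']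
    have hl : 0 < ‖l‖ := norm_pos_iff.2 hl
    have := (le_muP hp y (l := (‖l‖⁻¹ : ℂ) • l) (by simp [norm_smul, hl.ne'])).trans h
    simp_rw [smul_apply, rpow_sum_norm_smul_rpow hp] at this
    rwa [norm_inv, Complex.norm_real, norm_norm, inv_mul_le_iff₀ hl, mul_one] at this
  · rintro _ ⟨l, hl, rfl⟩
    exact (h l).trans hl

end WeakNorm

lemma exists_sum_norm_rpow_le_one_and_sum_mul_eq {ι 𝕜 : Type*} [Fintype ι] [RCLike 𝕜]
    {p q : ℝ} (hpq : p.HolderConjugate q) (w : ι → 𝕜) :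
    ∃ d : ι → 𝕜, ∑ i, ‖d i‖ ^ q ≤ 1 ∧ ∑ i, d i * w i = ((∑ i, ‖w i‖ ^ p) ^ (1 / p) : ℝ) := by
  obtain ⟨⟨a, ha, hsum⟩, -⟩ := NNReal.isGreatest_Lp Finset.univ (fun i => ‖w i‖₊) hpq
  choose c hc using fun i => RCLike.exists_norm_eq_mul_self (w i)
  refine ⟨fun i => ((a i : ℝ) : 𝕜) * c i, by simpa [(hc _).1] using NNReal.coe_le_coe.2 ha, ?_⟩
  have hsum' := congrArg (fun r : ℝ≥0 => ((r : ℝ) : 𝕜)) hsum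
  simp only [NNReal.coe_sum, NNReal.coe_mul, NNReal.coe_rpow, coe_nnnorm] at hsum'
  push_cast at hsum'
  rw [← hsum']
  refine Finset.sum_congr rfl fun i _ => ?_
  simp only [(hc i).2]
  ring

lemma enorm_sum_rpow_le_of_pairwise_eq_zero {ι E : Type*} [Fintype ι] [NormedAddCommGroup E]
    {r : ℝ} (hr : 0 < r) {v : ι → E} (hv : Pairwise fun i j => v i = 0 ∨ v j = 0) :
    ‖∑ i, v i‖ₑ ^ r ≤ ∑ i, ‖v i‖ₑ ^ r := by
  by_cases h : ∀ i, v i = 0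
  · simp [h, ENNReal.zero_rpow_of_pos hr]
  obtain ⟨k, hk⟩ := not_forall.1 h
  rw [Finset.sum_eq_single k (fun j _ hj => (hv hj.symm).resolve_left hk) (by simp)]
  exact Finset.single_le_sum (f := fun i => ‖v i‖ₑ ^ r) (by simp) (Finset.mem_univ k)

section Lp

variable {Ω E : Type*} [MeasurableSpace Ω] {m : Measure Ω} [NormedAddCommGroup E] {q : ℝ≥0∞}

lemma eLpNorm_rpow_toReal_eq_lintegral (hq0 : q ≠ 0) (hq : q ≠ ∞) (g : Ω → E) :
    eLpNorm g q m ^ q.toReal = ∫⁻ t, ‖g t‖ₑ ^ q.toReal ∂m := by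
  rw [eLpNorm_eq_eLpNorm' hq0 hq, lintegral_rpow_enorm_eq_rpow_eLpNorm' (ENNReal.toReal_pos hq0 hq)]

lemma Lp.norm_sum_rpow_le_of_pairwise_ae_eq_zero [Fact (1 ≤ q)] (hq : q ≠ ∞) {ι : Type*}
    [Fintype ι] (g : ι → Lp E q m) (hg : Pairwise fun i j => ∀ᵐ t ∂m, g i t = 0 ∨ g j t = 0) :
    ‖∑ i, g i‖ ^ q.toReal ≤ ∑ i, ‖g i‖ ^ q.toReal := by
  have hq0 : q ≠ 0 := (zero_lt_one.trans_le Fact.out).ne'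
  have hr : 0 < q.toReal := ENNReal.toReal_pos hq0 hq
  suffices ‖∑ i, g i‖ₑ ^ q.toReal ≤ ∑ i, ‖g i‖ₑ ^ q.toReal by
    have hfin : ∑ i, ‖g i‖ₑ ^ q.toReal ≠ ∞ :=
      ENNReal.sum_ne_top.2 fun i _ => ENNReal.rpow_ne_top_of_nonneg hr.le enorm_ne_top
    simpa [← toReal_enorm, ← ENNReal.toReal_rpow, ENNReal.toReal_sum, hfin]
      using ENNReal.toReal_mono hfin this
  simp only [Lp.enorm_def, eLpNorm_rpow_toReal_eq_lintegral hq0 hq]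
  rw [← lintegral_finsetSum' _ fun i _ => (Lp.aestronglyMeasurable (g i)).enorm.pow_const _]
  have hg' : ∀ᵐ t ∂m, Pairwise fun i j => g i t = 0 ∨ g j t = 0 := by
    simpa only [Pairwise, ae_all_iff, Filter.eventually_imp_distrib_left] using hg
  refine lintegral_mono_ae ?_
  filter_upwards [Lp.coeFn_fun_finsetSum Finset.univ g, hg'] with t hsum ht
  rw [hsum]
  exact enorm_sum_rpow_le_of_pairwise_eq_zero hr ht

lemma sum_eLpNorm_restrict_rpow_le (hq0 : q ≠ 0) (hq : q ≠ ∞) {ι : Type*} [Fintype ι]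
    {S : ι → Set Ω} (hSm : ∀ i, MeasurableSet (S i)) (hSd : Pairwise (Function.onFun Disjoint S))
    (g : Ω → E) :
    ∑ i, eLpNorm g q (m.restrict (S i)) ^ q.toReal ≤ eLpNorm g q m ^ q.toReal := by
  simp only [eLpNorm_rpow_toReal_eq_lintegral hq0 hq]
  calc ∑ i, ∫⁻ t in S i, ‖g t‖ₑ ^ q.toReal ∂m = ∫⁻ t in ⋃ i, S i, ‖g t‖ₑ ^ q.toReal ∂m := by
        rw [lintegral_iUnion hSm hSd, tsum_fintype]
    _ ≤ ∫⁻ t, ‖g t‖ₑ ^ q.toReal ∂m := setLIntegral_le_lintegral _ _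

variable [NormedSpace ℝ E]

lemma measureReal_rpow_neg_mul_norm_setIntegral_le {p : ℝ} (hpq : p.HolderConjugate q.toReal)
    {S : Set Ω} (hS : m S ≠ ∞) {g : Ω → E} (hg : MemLp g q m) :
    m.real S ^ (-(1 / p)) * ‖∫ t in S, g t ∂m‖ ≤ (eLpNorm g q (m.restrict S)).toReal := by
  have hqt : q ≠ ∞ := (ENNReal.toReal_pos_iff.1 hpq.symm.pos).2.ne
  have hq1 : 1 ≤ q := by simpa using (ENNReal.ofReal_le_iff_le_toReal hqt).2 hpq.symm.lt.le
  have holder : ‖∫ t in S, g t ∂m‖ₑ ≤ eLpNorm g q (m.restrict S) * m S ^ (1 / p) :=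
    calc ‖∫ t in S, g t ∂m‖ₑ ≤ eLpNorm g 1 (m.restrict S) := by
          rw [eLpNorm_one_eq_lintegral_enorm]
          exact enorm_integral_le_lintegral_enorm _
      _ ≤ eLpNorm g q (m.restrict S) * m S ^ (1 / p) := by
          convert eLpNorm_le_eLpNorm_mul_rpow_measure_univ hq1 hg.aestronglyMeasurable.restrict
            using 3
          · rw [Measure.restrict_apply_univ]
          · rw [ENNReal.toReal_one, div_one, one_div, one_div, hpq.symm.one_sub_inv]
  have holder' : ‖∫ t in S, g t ∂m‖ ≤ (eLpNorm g q (m.restrict S)).toReal * m.real S ^ (1 / p) := by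
    have hfin : eLpNorm g q (m.restrict S) * m S ^ (1 / p) ≠ ∞ :=
      ENNReal.mul_ne_top (hg.restrict S).eLpNorm_ne_top
        (ENNReal.rpow_ne_top_of_nonneg hpq.one_div_nonneg hS)
    simpa [ENNReal.toReal_mul, ← ENNReal.toReal_rpow, toReal_enorm, measureReal_def]
      using ENNReal.toReal_mono hfin holder
  -- For `m S = 0` this holds because `0 ^ (-(1 / p)) = 0` in `ℝ`.
  have hmS : m.real S ^ (-(1 / p)) * m.real S ^ (1 / p) ≤ 1 := by
    rcases (measureReal_nonneg (μ := m) (s := S)).eq_or_lt with h0 | hpos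
    · rw [← h0, Real.zero_rpow (neg_ne_zero.2 hpq.one_div_ne_zero), zero_mul]
      exact zero_le_one
    · rw [← Real.rpow_add hpos, neg_add_cancel, Real.rpow_zero]
  calc m.real S ^ (-(1 / p)) * ‖∫ t in S, g t ∂m‖
      ≤ m.real S ^ (-(1 / p)) * ((eLpNorm g q (m.restrict S)).toReal * m.real S ^ (1 / p)) := by
        gcongr
    _ = (eLpNorm g q (m.restrict S)).toReal * (m.real S ^ (-(1 / p)) * m.real S ^ (1 / p)) := by
        ring
    _ ≤ (eLpNorm g q (m.restrict S)).toReal := mul_le_of_le_one_right ENNReal.toReal_nonneg hmS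

lemma sum_measureReal_rpow_neg_mul_norm_setIntegral_rpow_le {p : ℝ}
    (hpq : p.HolderConjugate q.toReal) {ι : Type*} [Fintype ι] {S : ι → Set Ω}
    (hSm : ∀ i, MeasurableSet (S i)) (hSd : Pairwise (Function.onFun Disjoint S))
    (hS : ∀ i, m (S i) ≠ ∞) {g : Ω → E} (hg : MemLp g q m) :
    ∑ i, (m.real (S i) ^ (-(1 / p)) * ‖∫ t in S i, g t ∂m‖) ^ q.toReal
      ≤ (eLpNorm g q m).toReal ^ q.toReal := by
  have hr : 0 < q.toReal := hpq.symm.pos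
  have hq0 : q ≠ 0 := (ENNReal.toReal_pos_iff.1 hr).1.ne'
  have hqt : q ≠ ∞ := (ENNReal.toReal_pos_iff.1 hr).2.ne
  have hfin : ∀ i, eLpNorm g q (m.restrict (S i)) ^ q.toReal ≠ ∞ := fun i =>
    ENNReal.rpow_ne_top_of_nonneg hr.le (hg.restrict (S i)).eLpNorm_ne_top
  calc ∑ i, (m.real (S i) ^ (-(1 / p)) * ‖∫ t in S i, g t ∂m‖) ^ q.toReal
      ≤ ∑ i, (eLpNorm g q (m.restrict (S i))).toReal ^ q.toReal := by
        gcongr with i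
        exact measureReal_rpow_neg_mul_norm_setIntegral_le hpq (hS i) hg
    _ = (∑ i, eLpNorm g q (m.restrict (S i)) ^ q.toReal).toReal := by
        simp [ENNReal.toReal_sum fun i _ => hfin i, ENNReal.toReal_rpow]
    _ ≤ (eLpNorm g q m ^ q.toReal).toReal :=
        ENNReal.toReal_mono (ENNReal.rpow_ne_top_of_nonneg hr.le hg.eLpNorm_ne_top)
          (sum_eLpNorm_restrict_rpow_le hq0 hqt hSm hSd g)
    _ = (eLpNorm g q m).toReal ^ q.toReal := (ENNReal.toReal_rpow _ _).symm

end Lp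

section Indicator

variable {Ω : Type*} [MeasurableSpace Ω] {m : Measure Ω} {q : ℝ≥0∞} {s t : Set Ω}

lemma indicatorConstLp_mul_indicatorConstLp_ae_eq_zero (hs : MeasurableSet s)
    (ht : MeasurableSet t) (hμs : m s ≠ ∞) (hμt : m t ≠ ∞) (hst : Disjoint s t) (a b : ℂ) :
    (fun ω => indicatorConstLp q hs hμs a ω * indicatorConstLp q ht hμt b ω) =ᵐ[m] 0 := by
  filter_upwards [indicatorConstLp_coeFn (p := q) (hs := hs) (hμs := hμs) (c := a),
    indicatorConstLp_coeFn (p := q) (hs := ht) (hμs := hμt) (c := b)] with ω hωs hωt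
  rw [hωs, hωt]
  by_cases hω : ω ∈ s
  · simp [indicator_of_notMem (disjoint_left.1 hst hω)]
  · simp [indicator_of_notMem hω]

lemma norm_indicatorConstLp_measureReal_rpow_neg [Fact (1 ≤ q)] (hq : q ≠ ∞)
    (hs : MeasurableSet s) (hμs : m s ≠ ∞) (hμs₀ : m s ≠ 0) :
    ‖indicatorConstLp q hs hμs ((m.real s ^ (-(1 / q.toReal)) : ℝ) : ℂ)‖ = 1 := by
  have hpos : 0 < m.real s := ENNReal.toReal_pos hμs₀ hμs
  rw [norm_indicatorConstLp (zero_lt_one.trans_le Fact.out).ne' hq, Complex.norm_real,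
    Real.norm_of_nonneg (Real.rpow_nonneg hpos.le _), ← Real.rpow_add hpos, neg_add_cancel,
    Real.rpow_zero]

end Indicator

lemma rpow_sum_norm_apply_le_opNorm {Ω : Type*} [MeasurableSpace Ω] {m : Measure Ω}
    {q : ℝ≥0∞} [Fact (1 ≤ q)] {p : ℝ} (hpq : p.HolderConjugate q.toReal) {ι : Type*}
    [Fintype ι] (φ : StrongDual ℂ (Lp ℂ q m)) (f : ι → Lp ℂ q m) (hf : ∀ i, ‖f i‖ ≤ 1)
    (hdisj : Pairwise fun i j => ∀ᵐ t ∂m, f i t = 0 ∨ f j t = 0) :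
    (∑ i, ‖φ (f i)‖ ^ p) ^ (1 / p) ≤ ‖φ‖ := by
  have hr : 0 < q.toReal := hpq.symm.pos
  obtain ⟨d, hd, hdφ⟩ := exists_sum_norm_rpow_le_one_and_sum_mul_eq hpq fun i => φ (f i)
  have hdisj' : Pairwise fun i j => ∀ᵐ t ∂m, (d i • f i) t = 0 ∨ (d j • f j) t = 0 := by
    intro i j hij
    filter_upwards [hdisj hij, Lp.coeFn_smul (d i) (f i), Lp.coeFn_smul (d j) (f j)]
      with t ht hi hj
    rw [hi, hj]
    rcases ht with h | h <;> simp [h]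
  have hg : ‖∑ i, d i • f i‖ ≤ 1 := by
    rw [← Real.rpow_le_rpow_iff (norm_nonneg _) zero_le_one hr, Real.one_rpow]
    calc ‖∑ i, d i • f i‖ ^ q.toReal ≤ ∑ i, ‖d i • f i‖ ^ q.toReal :=
          Lp.norm_sum_rpow_le_of_pairwise_ae_eq_zero (ENNReal.toReal_pos_iff.1 hr).2.ne _ hdisj'
      _ ≤ ∑ i, ‖d i‖ ^ q.toReal := by
          gcongr with i
          rw [norm_smul]
          exact mul_le_of_le_one_right (norm_nonneg _) (hf i)
      _ ≤ 1 := hd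
  calc (∑ i, ‖φ (f i)‖ ^ p) ^ (1 / p) = ‖φ (∑ i, d i • f i)‖ := by
        rw [map_sum]
        simp only [map_smul, smul_eq_mul, hdφ]
        exact (Complex.norm_of_nonneg (by positivity)).symm
    _ ≤ ‖φ‖ * ‖∑ i, d i • f i‖ := φ.le_opNorm _
    _ ≤ ‖φ‖ := mul_le_of_le_one_right (norm_nonneg _) hg

section BlockIntegralOp

variable {Ω E X : Type*} [MeasurableSpace Ω] {m : Measure Ω} {q : ℝ≥0∞} [Fact (1 ≤ q)]
  [NormedAddCommGroup E] [NormedSpace ℂ E] [CompleteSpace E]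
  [NormedAddCommGroup X] [NormedSpace ℂ X]

noncomputable def Lp.setIntegralₗ (S : Set Ω) (hS : m S ≠ ∞) : Lp E q m →ₗ[ℂ] E where
  toFun g := ∫ t in S, g t ∂m
  map_add' g h := by
    rw [← integral_add (integrableOn_Lp_of_measure_ne_top g Fact.out hS)
      (integrableOn_Lp_of_measure_ne_top h Fact.out hS)]
    exact integral_congr_ae (ae_restrict_of_ae (Lp.coeFn_add g h))
  map_smul' c g := by
    rw [RingHom.id_apply, ← integral_smul]
    exact integral_congr_ae (ae_restrict_of_ae (Lp.coeFn_smul c g))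

variable {ι : Type*} [Fintype ι]

noncomputable def blockIntegralOp (p : ℝ) (S : ι → Set Ω) (hS : ∀ i, m (S i) ≠ ∞)
    (x : ι → X) : Lp ℂ q m →ₗ[ℂ] X :=
  ∑ i, ((m.real (S i) ^ (-(1 / p)) : ℝ) : ℂ) • (Lp.setIntegralₗ (S i) (hS i)).smulRight (x i)

lemma blockIntegralOp_apply (p : ℝ) (S : ι → Set Ω) (hS : ∀ i, m (S i) ≠ ∞) (x : ι → X)
    (g : Lp ℂ q m) :
    blockIntegralOp p S hS x g
      = ∑ i, (((m.real (S i) ^ (-(1 / p)) : ℝ) : ℂ) * ∫ t in S i, g t ∂m) • x i := by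
  simp [blockIntegralOp, Lp.setIntegralₗ, mul_smul, Complex.coe_smul]

lemma norm_blockIntegralOp_apply_le {p : ℝ} (hpq : p.HolderConjugate q.toReal)
    {S : ι → Set Ω} (hSm : ∀ i, MeasurableSet (S i)) (hSd : Pairwise (Function.onFun Disjoint S))
    (hS : ∀ i, m (S i) ≠ ∞) {x : ι → X}
    (hx : ∀ l : StrongDual ℂ X, (∑ i, ‖l (x i)‖ ^ p) ^ (1 / p) ≤ ‖l‖) (g : Lp ℂ q m) :
    ‖blockIntegralOp p S hS x g‖ ≤ ‖g‖ := by
  have hr : 0 < q.toReal := hpq.symm.pos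
  set c : ι → ℝ := fun i => m.real (S i) ^ (-(1 / p)) * ‖∫ t in S i, g t ∂m‖
  have hc : (∑ i, c i ^ q.toReal) ^ (1 / q.toReal) ≤ ‖g‖ := by
    rw [one_div, Real.rpow_inv_le_iff_of_pos (by positivity) (norm_nonneg _) hr, Lp.norm_def]
    exact sum_measureReal_rpow_neg_mul_norm_setIntegral_rpow_le hpq hSm hSd hS (Lp.memLp g)
  refine norm_le_dual_bound ℂ _ (norm_nonneg g) fun l => ?_
  calc ‖l (blockIntegralOp p S hS x g)‖ ≤ ∑ i, ‖l (x i)‖ * c i := by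
        rw [blockIntegralOp_apply, map_sum]
        refine (norm_sum_le _ _).trans_eq (Finset.sum_congr rfl fun i _ => ?_)
        rw [map_smul, norm_smul, norm_mul, Complex.norm_real,
          Real.norm_of_nonneg (Real.rpow_nonneg measureReal_nonneg _), mul_comm]
    _ ≤ (∑ i, ‖l (x i)‖ ^ p) ^ (1 / p) * (∑ i, c i ^ q.toReal) ^ (1 / q.toReal) :=
        Real.inner_le_Lp_mul_Lq_of_nonneg _ hpq (fun i _ => norm_nonneg _)
          fun i _ => by positivity
    _ ≤ ‖l‖ * ‖g‖ := by gcongr; exact hx l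
    _ = ‖g‖ * ‖l‖ := mul_comm _ _

lemma blockIntegralOp_indicatorConstLp {p : ℝ} (hpq : p.HolderConjugate q.toReal)
    {S : ι → Set Ω} (hSm : ∀ i, MeasurableSet (S i)) (hSd : Pairwise (Function.onFun Disjoint S))
    (hS : ∀ i, m (S i) ≠ ∞) (hS₀ : ∀ i, m (S i) ≠ 0) (x : ι → X) (i : ι) :
    blockIntegralOp p S hS x
      (indicatorConstLp q (hSm i) (hS i) ((m.real (S i) ^ (-(1 / q.toReal)) : ℝ) : ℂ)) = x i := by
  have hpos : 0 < m.real (S i) := ENNReal.toReal_pos (hS₀ i) (hS i)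
  rw [blockIntegralOp_apply, Finset.sum_eq_single i]
  · rw [setIntegral_indicatorConstLp (hSm i), inter_self, Complex.real_smul, ← mul_assoc]
    norm_cast
    have hexp : -(1 / p) + 1 + -(1 / q.toReal) = 0 := by
      simp only [one_div]
      linarith [hpq.inv_add_inv_eq_one]
    have hM : m.real (S i) ^ (-(1 / p)) * m.real (S i) * m.real (S i) ^ (-(1 / q.toReal)) = 1 :=
      calc _ = m.real (S i) ^ (-(1 / p) + 1 + -(1 / q.toReal)) := by
            rw [Real.rpow_add hpos, Real.rpow_add hpos, Real.rpow_one]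
        _ = 1 := by rw [hexp, Real.rpow_zero]
    rw [hM, one_smul]
  · intro j _ hji
    rw [setIntegral_indicatorConstLp (hSm j), (hSd hji.symm).inter_eq, measureReal_empty]
    simp
  · simp

end BlockIntegralOp

theorem stmt8_general {Ω : Type*} [MeasurableSpace Ω] (m : Measure Ω)
    (p p' : ℝ) (hpp' : p.HolderConjugate p')
    [Fact (1 ≤ ENNReal.ofReal p')]
    (X : Type*) [NormedAddCommGroup X] [NormedSpace ℂ X]
    (n : ℕ) (S : Fin n → Set Ω) (hSm : ∀ i, MeasurableSet (S i))
    (hSd : Pairwise (Function.onFun Disjoint S))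
    (hS0 : ∀ i, 0 < m (S i)) (hSfin : ∀ i, m (S i) < ⊤)
    (x : Fin n → X) :
    muP p x ≤ 1 ↔
      ∃ (U : Lp ℂ (ENNReal.ofReal p') m →L[ℂ] X)
        (f : Fin n → Lp ℂ (ENNReal.ofReal p') m),
        ‖U‖ ≤ 1 ∧ (∀ i, ‖f i‖ ≤ 1) ∧
        (∀ i j, i ≠ j → (fun t => (f i : Ω → ℂ) t * (f j : Ω → ℂ) t) =ᵐ[m] 0) ∧
        (∀ i, x i = U (f i)) := by
  have hpq : p.HolderConjugate (ENNReal.ofReal p').toReal := by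
    rwa [ENNReal.toReal_ofReal hpp'.symm.nonneg]
  have hS : ∀ i, m (S i) ≠ ∞ := fun i => (hSfin i).ne
  rw [muP_le_one_iff hpp'.pos]
  constructor
  · intro hx
    have hU : ∀ g, ‖blockIntegralOp p S hS x g‖ ≤ 1 * ‖g‖ := fun g =>
      (norm_blockIntegralOp_apply_le hpq hSm hSd hS hx g).trans_eq (one_mul _).symm
    refine ⟨(blockIntegralOp p S hS x).mkContinuous 1 hU,
      fun i => indicatorConstLp _ (hSm i) (hS i)
        ((m.real (S i) ^ (-(1 / (ENNReal.ofReal p').toReal)) : ℝ) : ℂ),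
      LinearMap.mkContinuous_norm_le _ zero_le_one hU,
      fun i => (norm_indicatorConstLp_measureReal_rpow_neg ENNReal.ofReal_ne_top _ _
        (hS0 i).ne').le,
      fun i j hij => indicatorConstLp_mul_indicatorConstLp_ae_eq_zero _ _ _ _ (hSd hij) _ _,
      fun i => (blockIntegralOp_indicatorConstLp hpq hSm hSd hS (fun i => (hS0 i).ne') x i).symm⟩
  · rintro ⟨U, f, hU, hf, hdisj, hxU⟩ l
    have hdisj' : Pairwise fun i j => ∀ᵐ t ∂m, f i t = 0 ∨ f j t = 0 := fun i j hij =>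
      (hdisj i j hij).mono fun t ht => mul_eq_zero.1 ht
    calc (∑ i, ‖l (x i)‖ ^ p) ^ (1 / p) ≤ ‖l.comp U‖ := by
          simpa only [hxU, ContinuousLinearMap.comp_apply]
            using rpow_sum_norm_apply_le_opNorm hpq (l.comp U) f hf hdisj'
      _ ≤ ‖l‖ * ‖U‖ := l.opNorm_comp_le U
      _ ≤ ‖l‖ := mul_le_of_le_one_right (norm_nonneg _) hU

/-- let `1 < p < ∞` with conjugate exponent `p'`, let `X` be a complex Banach
space, and let `(Ω, m)` contain pairwise disjoint measurable sets `S_1,…,S_n` of finite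
positive measure.  Then for `x ∈ X^n`, `μ_{p,n}(x) ≤ 1` if and only if there are a bounded
linear operator `U : L^{p'}(Ω,m) → X` of norm at most `1` and functions
`f_1,…,f_n ∈ L^{p'}(Ω,m)` of norm at most `1`, with pairwise almost everywhere disjoint
supports (`f_i · f_j = 0` a.e. for `i ≠ j`), such that `x_i = U(f_i)` for each `i`. -/
theorem stmt8 {Ω : Type*} [MeasurableSpace Ω] (m : Measure Ω)
    (p p' : ℝ) (hp : 1 < p) (hpp' : p.HolderConjugate p')
    [Fact (1 ≤ ENNReal.ofReal p')]
    (X : Type*) [NormedAddCommGroup X] [NormedSpace ℂ X] [CompleteSpace X]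
    (n : ℕ) (S : Fin n → Set Ω) (hSm : ∀ i, MeasurableSet (S i))
    (hSd : Pairwise (Function.onFun Disjoint S))
    (hS0 : ∀ i, 0 < m (S i)) (hSfin : ∀ i, m (S i) < ⊤)
    (x : Fin n → X) :
    muP p x ≤ 1 ↔
      ∃ (U : Lp ℂ (ENNReal.ofReal p') m →L[ℂ] X)
        (f : Fin n → Lp ℂ (ENNReal.ofReal p') m),
        ‖U‖ ≤ 1 ∧ (∀ i, ‖f i‖ ≤ 1) ∧
        (∀ i j, i ≠ j → (fun t => (f i : Ω → ℂ) t * (f j : Ω → ℂ) t) =ᵐ[m] 0) ∧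
        (∀ i, x i = U (f i)) :=
  stmt8_general m p p' hpp' X n S hSm hSd hS0 hSfin x
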